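/- Let q ≥ 1 and let v be a real number with q + 2v ≠ 0. Then the diamond map satisfies Diamond_q(v) ≥ −q, with strict inequality unless q = 1 and v = −1. -/

import Mathlib

/-- The diamond map `Diamond_q(v) = v²(v² + 4v + 2q)/(q + 2v)²`, defined for
`q + 2v ≠ 0`; it arises as `(v ⋈_q v) ∥ (v ⋈_q v)`. -/
noncomputable def diamondMap (q v : ℝ) : ℝ :=
  v ^ 2 * (v ^ 2 + 4 * v + 2 * q) / (q + 2 * v) ^ 2

/-!
Clearing the denominator, `Diamond_q(v) + q` is the quotient of
`(v² + 2v + q)² + (q - 1)(q + 2v)²` by `(q + 2v)²`. For `q ≥ 1` the numerator is a sum of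
two nonnegative terms; the second one is positive when `q > 1`, and when `q = 1` the first
one is `(v + 1)⁴`, which vanishes only at `v = -1`.
-/

theorem diamondMap_add_eq_div {q v : ℝ} (h : q + 2 * v ≠ 0) :
    diamondMap q v + q =
      ((v ^ 2 + 2 * v + q) ^ 2 + (q - 1) * (q + 2 * v) ^ 2) / (q + 2 * v) ^ 2 := by
  rw [diamondMap, div_add' _ _ _ (pow_ne_zero 2 h), div_left_inj' (pow_ne_zero 2 h)]
  ring

theorem neg_le_diamondMap {q v : ℝ} (hq : 1 ≤ q) (h : q + 2 * v ≠ 0) :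
    -q ≤ diamondMap q v := by
  have hnum : 0 ≤ (v ^ 2 + 2 * v + q) ^ 2 + (q - 1) * (q + 2 * v) ^ 2 :=
    add_nonneg (sq_nonneg _) (mul_nonneg (sub_nonneg.2 hq) (sq_nonneg _))
  have := diamondMap_add_eq_div h ▸ div_nonneg hnum (sq_nonneg (q + 2 * v))
  linarith

theorem neg_lt_diamondMap {q v : ℝ} (hq : 1 ≤ q) (h : q + 2 * v ≠ 0)
    (hqv : ¬(q = 1 ∧ v = -1)) : -q < diamondMap q v := by
  have hnum : 0 < (v ^ 2 + 2 * v + q) ^ 2 + (q - 1) * (q + 2 * v) ^ 2 := by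
    rcases hq.lt_or_eq with hq1 | rfl
    · have : 0 < (q + 2 * v) ^ 2 := by positivity
      exact add_pos_of_nonneg_of_pos (sq_nonneg _) (mul_pos (sub_pos.2 hq1) this)
    · have hv : v + 1 ≠ 0 := fun hv => hqv ⟨rfl, by linarith⟩
      calc (0 : ℝ) < (v + 1) ^ 4 := by positivity
        _ = _ := by ring
  have := diamondMap_add_eq_div h ▸ div_pos hnum (by positivity : 0 < (q + 2 * v) ^ 2)
  linarith

/-- For `q ≥ 1` and `q + 2v ≠ 0`, the diamond map satisfies `Diamond_q(v) ≥ -q`,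
with strict inequality unless `q = 1` and `v = -1`. -/
theorem diamondMap_ge_neg_q (q v : ℝ) (hq : 1 ≤ q) (h : q + 2 * v ≠ 0) :
    -q ≤ diamondMap q v ∧ (¬(q = 1 ∧ v = -1) → -q < diamondMap q v) :=
  ⟨neg_le_diamondMap hq h, neg_lt_diamondMap hq h⟩
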